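/- Let f : ℝ → ℝ be the inverse of h and define L : ℝ → ℝ by L(v) = f(v)². Then for every v ∈ ℝ, L is differentiable at v with L'(v) = 2·f(v)/√(1 + f(v)²), the derivative function L' is itself differentiable at v with L''(v) = 2/(1 + f(v)²)², and L''(v) > 0. -/

import Mathlib

/-- The change of variables `h(u) = (1/2)·u·√(1+u²) + (1/2)·log(u + √(1+u²))`. -/
noncomputable def h (u : ℝ) : ℝ :=
  (1 / 2) * u * Real.sqrt (1 + u ^ 2) + (1 / 2) * Real.log (u + Real.sqrt (1 + u ^ 2))

/-!
Since `log (u + √(1+u²)) = arsinh u`, one finds `h'(u) = √(1+u²) > 0`, so `h` is a strictly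
increasing bijection whose inverse `f` is continuous, with `f' = 1/√(1+f²)`. The chain rule then
gives `L' = 2 f f' = 2f/√(1+f²)`, and since `u ↦ 2u/√(1+u²)` has derivative `2/√(1+u²)³`,
`L'' = 2/√(1+f²)³ · 1/√(1+f²) = 2/(1+f²)²`.
-/

open Real

lemma StrictMono.continuous_of_rightInverse {α β : Type*} [LinearOrder α] [TopologicalSpace α]
    [OrderTopology α] [DenselyOrdered α] [LinearOrder β] [TopologicalSpace β] [OrderTopology β]
    {g : α → β} {f : β → α}
    (hg : StrictMono g) (hf : Function.RightInverse f g) : Continuous f := by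
  have hf_mono : Monotone f := fun a b hab => hg.le_iff_le.mp (by rwa [hf a, hf b])
  exact hf_mono.continuous_of_surjective fun u => ⟨g u, hg.injective (hf (g u))⟩

lemma sqrt_one_add_sq_pos (u : ℝ) : 0 < √(1 + u ^ 2) := by positivity

lemma hasDerivAt_sqrt_one_add_sq (u : ℝ) :
    HasDerivAt (fun u : ℝ => √(1 + u ^ 2)) (u / √(1 + u ^ 2)) u := by
  have hsq : HasDerivAt (fun u : ℝ => 1 + u ^ 2) (2 * u) u := by
    simpa using (hasDerivAt_pow 2 u).const_add 1
  refine (hsq.sqrt (by positivity)).congr_deriv ?_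
  field_simp

lemma hasDerivAt_h (u : ℝ) : HasDerivAt h √(1 + u ^ 2) u := by
  have hderiv := (((hasDerivAt_id u).const_mul (1 / 2 : ℝ)).mul
    (hasDerivAt_sqrt_one_add_sq u)).add ((hasDerivAt_arsinh u).const_mul (1 / 2 : ℝ))
  refine hderiv.congr_deriv ?_
  have hs := sqrt_one_add_sq_pos u
  simp only [id]
  field_simp
  rw [sq_sqrt (by positivity)]
  ring

lemma strictMono_h : StrictMono h :=
  strictMono_of_deriv_pos fun u => (hasDerivAt_h u).deriv ▸ sqrt_one_add_sq_pos u

lemma hasDerivAt_two_mul_div_sqrt_one_add_sq (u : ℝ) :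
    HasDerivAt (fun u : ℝ => 2 * u / √(1 + u ^ 2)) (2 / √(1 + u ^ 2) ^ 3) u := by
  have hs := sqrt_one_add_sq_pos u
  refine (((hasDerivAt_id u).const_mul 2).div
    (hasDerivAt_sqrt_one_add_sq u) hs.ne').congr_deriv ?_
  simp only [id]
  field_simp
  rw [sq_sqrt (by positivity)]
  ring

lemma hasDerivAt_of_rightInverse_h {f : ℝ → ℝ} (hf : Function.RightInverse f h) (v : ℝ) :
    HasDerivAt f (√(1 + f v ^ 2))⁻¹ v :=
  (hasDerivAt_h (f v)).of_local_left_inverse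
    (strictMono_h.continuous_of_rightInverse hf).continuousAt
    (sqrt_one_add_sq_pos (f v)).ne' (Filter.Eventually.of_forall hf)

theorem stmt_11_general (f : ℝ → ℝ)
    (hf₂ : Function.RightInverse f h) :
    ∀ v : ℝ,
      HasDerivAt (fun v : ℝ => f v ^ 2) (2 * f v / Real.sqrt (1 + f v ^ 2)) v ∧
      HasDerivAt (fun v : ℝ => 2 * f v / Real.sqrt (1 + f v ^ 2))
        (2 / (1 + f v ^ 2) ^ 2) v ∧
      0 < 2 / (1 + f v ^ 2) ^ 2 := by
  intro v
  have hf' := hasDerivAt_of_rightInverse_h hf₂ v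
  have hs := sqrt_one_add_sq_pos (f v)
  refine ⟨?_, ?_, by positivity⟩
  · refine (hf'.pow 2).congr_deriv ?_
    field_simp
    norm_num [mul_comm]
  · refine ((hasDerivAt_two_mul_div_sqrt_one_add_sq (f v)).comp v hf').congr_deriv ?_
    have hs4 : √(1 + f v ^ 2) ^ 4 = (1 + f v ^ 2) ^ 2 := by
      rw [show 4 = 2 * 2 from rfl, pow_mul, sq_sqrt (by positivity)]
    field_simp
    rw [hs4]

theorem stmt_11 (f : ℝ → ℝ) (hf₁ : Function.LeftInverse f h)
    (hf₂ : Function.RightInverse f h) :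
    ∀ v : ℝ,
      HasDerivAt (fun v : ℝ => f v ^ 2) (2 * f v / Real.sqrt (1 + f v ^ 2)) v ∧
      HasDerivAt (fun v : ℝ => 2 * f v / Real.sqrt (1 + f v ^ 2))
        (2 / (1 + f v ^ 2) ^ 2) v ∧
      0 < 2 / (1 + f v ^ 2) ^ 2 :=
  stmt_11_general f hf₂
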